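/- For any positive integer s, the factorial elementary and complete homogeneous functions in p variables satisfy Σ_{r=0}^{p} (−1)^r e_r(x|a) h_{s−r}(x | τ^{1−s}a) = 0. -/

import Mathlib

open Finset
open scoped Classical

noncomputable section

variable {R : Type*} [CommRing R]

/-- shifted sequence: `(τ^s a)_n = a_{n+s}` -/
def shiftSeq (a : ℤ → R) (s : ℤ) : ℤ → R := fun n => a (n + s)

/-- factorial complete homogeneous function `h_k(x|a)`
    (`= Σ_{1≤i_1≤...≤i_k≤p} ∏_r (x_{i_r} - a_{i_r + r - 1})`, `0` for `k < 0`) -/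
def fh (p : ℕ) (x : Fin p → R) (a : ℤ → R) (k : ℤ) : R :=
  if 0 ≤ k then
    ∑ f ∈ Finset.univ.filter (fun f : Fin k.toNat → Fin p => Monotone f),
      ∏ r : Fin k.toNat, (x (f r) - a (((f r : ℕ) : ℤ) + ((r : ℕ) : ℤ) + 1))
  else 0

/-- factorial elementary function `e_k(x|a)`
    (`= Σ_{1≤i_1<...<i_k≤p} ∏_r (x_{i_r} - a_{i_r - r + 1})`, `0` for `k < 0`;
    it vanishes automatically for `k > p`) -/
def fe (p : ℕ) (x : Fin p → R) (a : ℤ → R) (k : ℤ) : R :=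
  if 0 ≤ k then
    ∑ f ∈ Finset.univ.filter (fun f : Fin k.toNat → Fin p => StrictMono f),
      ∏ r : Fin k.toNat, (x (f r) - a (((f r : ℕ) : ℤ) - ((r : ℕ) : ℤ) + 1))
  else 0

/-- generalized factorial power `(y|a)^k = (y - a_1)⋯(y - a_k)` -/
def gfp (y : R) (a : ℤ → R) (k : ℕ) : R :=
  ∏ i ∈ Finset.range k, (y - a ((i : ℤ) + 1))

/-- the factorial Schur polynomial `s_λ(x|a)`, defined through the factorial
    Jacobi-Trudi determinant `det( h_{λ_i - i + j}(x | τ^{1-j} a) )_{1≤i,j≤p}` -/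
def fschur (p : ℕ) (lam : Fin p → ℕ) (x : Fin p → R) (a : ℤ → R) : R :=
  Matrix.det (Matrix.of fun i j : Fin p =>
    fh p x (shiftSeq a (-((j : ℕ) : ℤ))) (((lam i : ℕ) : ℤ) - ((i : ℕ) : ℤ) + ((j : ℕ) : ℤ)))

/-!
Induct on the number of variables. Removing the last variable `x_{p+1}` (and writing `x'` for
the others) gives
  `e_r(x|a) = e_r(x'|a) + (x_{p+1} - a_{p+2-r}) e_{r-1}(x'|a)`,
  `h_k(x|b) = h_k(x'|b) + (x_{p+1} - b_{p+k}) h_{k-1}(x|b)`.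
For `b = τ^{1-s} a` the coefficient `b_{p+s-r}` of the second recursion at `k = s - r` is
`a_{p+1-r}`, the coefficient of the first one at `r + 1`. So after shifting `r` by one in the
second half of the expanded sum, the two halves combine through the `h`-recursion into the
same alternating sum for `x'`. With no variables left the sum is `h_s(∅|b)`, which is `[s = 0]`.
-/

section FinTuples

variable {M : Type*} [AddCommMonoid M]

lemma Fin.monotone_castSucc_comp_iff {n p : ℕ} {g : Fin n → Fin p} :
    Monotone (Fin.castSucc ∘ g) ↔ Monotone g :=
  ⟨fun h _ _ hij => Fin.castSucc_le_castSucc_iff.mp (h hij),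
    Fin.strictMono_castSucc.monotone.comp⟩

lemma Fin.strictMono_castSucc_comp_iff {n p : ℕ} {g : Fin n → Fin p} :
    StrictMono (Fin.castSucc ∘ g) ↔ StrictMono g :=
  ⟨fun h _ _ hij => Fin.castSucc_lt_castSucc_iff.mp (h hij), Fin.strictMono_castSucc.comp⟩

lemma Fin.monotone_snoc_last_iff {m p : ℕ} {g : Fin m → Fin (p + 1)} :
    Monotone (Fin.snoc g (Fin.last p) : Fin (m + 1) → Fin (p + 1)) ↔ Monotone g := by
  refine ⟨fun h i j hij => ?_, fun hg u v huv => ?_⟩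
  · simpa using h (Fin.castSucc_le_castSucc_iff.mpr hij)
  induction v using Fin.lastCases with
  | last => simp [Fin.le_last]
  | cast v =>
    obtain ⟨u, rfl⟩ := u.eq_castSucc_of_ne_last
      (Fin.ne_last_of_lt (huv.trans_lt (Fin.castSucc_lt_last v)))
    simpa using hg (Fin.castSucc_le_castSucc_iff.mp huv)

lemma Fin.strictMono_snoc_last_iff {m p : ℕ} {g : Fin m → Fin (p + 1)} :
    StrictMono (Fin.snoc g (Fin.last p) : Fin (m + 1) → Fin (p + 1)) ↔
      StrictMono g ∧ ∀ i, g i ≠ Fin.last p := by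
  refine ⟨fun h => ⟨fun i j hij => ?_, fun i => ?_⟩, fun ⟨hg, hne⟩ u v huv => ?_⟩
  · simpa using h (Fin.castSucc_lt_castSucc_iff.mpr hij)
  · simpa using (h (Fin.castSucc_lt_last i)).ne
  obtain ⟨u, rfl⟩ := u.eq_castSucc_of_ne_last (Fin.ne_last_of_lt huv)
  induction v using Fin.lastCases with
  | last => simpa using Fin.lt_last_iff_ne_last.mpr (hne u)
  | cast v => simpa using hg (Fin.castSucc_lt_castSucc_iff.mp huv)

lemma Monotone.forall_ne_last_iff {m p : ℕ} {f : Fin (m + 1) → Fin (p + 1)} (hf : Monotone f) :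
    (∀ i, f i ≠ Fin.last p) ↔ f (Fin.last m) ≠ Fin.last p :=
  ⟨fun h => h _, fun h i hi => h (le_antisymm (Fin.le_last _) (hi ▸ hf (Fin.le_last i)))⟩

lemma Finset.sum_filter_forall_ne_last {n p : ℕ} (P : (Fin n → Fin (p + 1)) → Prop)
    [DecidablePred P] (F : (Fin n → Fin (p + 1)) → M) :
    ∑ f ∈ univ.filter (fun f => P f ∧ ∀ i, f i ≠ Fin.last p), F f =
      ∑ g ∈ univ.filter (fun g : Fin n → Fin p => P (Fin.castSucc ∘ g)),
        F (Fin.castSucc ∘ g) := by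
  symm
  refine Finset.sum_bij (fun g _ => Fin.castSucc ∘ g) (fun g hg => ?_)
    (fun g₁ _ g₂ _ h => funext fun i => Fin.castSucc_injective _ (congrFun h i))
    (fun f hf => ?_) (fun _ _ => rfl)
  · simp only [mem_filter, mem_univ, true_and] at hg ⊢
    exact ⟨hg, fun i => (Fin.castSucc_lt_last _).ne⟩
  · simp only [mem_filter, mem_univ, true_and] at hf ⊢
    refine ⟨fun i => (f i).castPred (hf.2 i), ?_, ?_⟩ <;>
      simp [Function.comp_def, Fin.castSucc_castPred, hf.1]

lemma Finset.sum_filter_last_eq_last {m p : ℕ} (P : (Fin (m + 1) → Fin (p + 1)) → Prop)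
    [DecidablePred P] (F : (Fin (m + 1) → Fin (p + 1)) → M) :
    ∑ f ∈ univ.filter (fun f => P f ∧ f (Fin.last m) = Fin.last p), F f =
      ∑ g ∈ univ.filter (fun g : Fin m → Fin (p + 1) => P (Fin.snoc g (Fin.last p))),
        F (Fin.snoc g (Fin.last p)) := by
  have hsnoc {f} (hf : f ∈ univ.filter (fun f => P f ∧ f (Fin.last m) = Fin.last p)) :
      Fin.snoc (Fin.init f) (Fin.last p) = f := by
    rw [← (mem_filter.mp hf).2.2, Fin.snoc_init_self]
  refine sum_nbij' Fin.init (fun g => Fin.snoc g (Fin.last p)) (fun f hf => ?_) (fun g hg => ?_)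
    (fun f hf => hsnoc hf) (fun g _ => Fin.init_snoc _ _) (fun f hf => by rw [hsnoc hf])
  · simpa [hsnoc hf] using (mem_filter.mp hf).2.1
  · simp only [mem_filter, mem_univ, true_and] at hg ⊢
    exact ⟨hg, Fin.snoc_last _ _⟩

lemma Finset.sum_filter_monotone_eq_castSucc_add_snoc {m p : ℕ}
    (P : (Fin (m + 1) → Fin (p + 1)) → Prop) [DecidablePred P] (hP : ∀ f, P f → Monotone f)
    (F : (Fin (m + 1) → Fin (p + 1)) → M) :
    ∑ f ∈ univ.filter P, F f =
      ∑ g ∈ univ.filter (fun g : Fin (m + 1) → Fin p => P (Fin.castSucc ∘ g)),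
          F (Fin.castSucc ∘ g) +
        ∑ g ∈ univ.filter (fun g : Fin m → Fin (p + 1) => P (Fin.snoc g (Fin.last p))),
          F (Fin.snoc g (Fin.last p)) := by
  rw [← sum_filter_forall_ne_last, ← sum_filter_last_eq_last P F,
    ← sum_filter_add_sum_filter_not (univ.filter P) (fun f => ∀ i, f i ≠ Fin.last p),
    filter_filter, filter_filter]
  congr 2
  exact filter_congr fun f _ => and_congr_right fun hf => by
    rw [(hP f hf).forall_ne_last_iff, not_not]

end FinTuples

section FactorialFunctions

variable (p : ℕ) (x : Fin p → R) (a : ℤ → R)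

lemma fh_natCast (m : ℕ) :
    fh p x a m = ∑ f ∈ univ.filter (fun f : Fin m → Fin p => Monotone f),
      ∏ r, (x (f r) - a ((f r : ℕ) + (r : ℕ) + 1)) :=
  if_pos (Int.natCast_nonneg m)

lemma fe_natCast (m : ℕ) :
    fe p x a m = ∑ f ∈ univ.filter (fun f : Fin m → Fin p => StrictMono f),
      ∏ r, (x (f r) - a ((f r : ℕ) - (r : ℕ) + 1)) :=
  if_pos (Int.natCast_nonneg m)

lemma fh_of_neg {k : ℤ} (hk : k < 0) : fh p x a k = 0 := if_neg hk.not_ge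

lemma fe_of_neg {k : ℤ} (hk : k < 0) : fe p x a k = 0 := if_neg hk.not_ge

lemma fh_degree_zero : fh p x a 0 = 1 := by
  rw [← Nat.cast_zero, fh_natCast]
  simp [Subsingleton.monotone]

lemma fe_degree_zero : fe p x a 0 = 1 := by
  rw [← Nat.cast_zero, fe_natCast]
  simp [Subsingleton.strictMono]

lemma fe_of_lt {k : ℕ} (hk : p < k) : fe p x a k = 0 := by
  rw [fe_natCast]
  exact sum_eq_zero fun f hf =>
    absurd (Fin.le_of_injective f (mem_filter.mp hf).2.injective) hk.not_ge

end FactorialFunctions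

lemma fh_zero (x : Fin 0 → R) (a : ℤ → R) (k : ℤ) :
    fh 0 x a k = if k = 0 then 1 else 0 := by
  rcases lt_trichotomy k 0 with hk | rfl | hk
  · rw [fh_of_neg _ _ _ hk, if_neg hk.ne]
  · rw [fh_degree_zero, if_pos rfl]
  obtain ⟨m, rfl⟩ : ∃ m : ℕ, k = m + 1 := ⟨k.toNat - 1, by omega⟩
  rw [← Nat.cast_add_one, fh_natCast, if_neg (by omega)]
  simp

lemma fh_succ (p : ℕ) (x : Fin (p + 1) → R) (a : ℤ → R) (k : ℤ) :
    fh (p + 1) x a k =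
      fh p (x ∘ Fin.castSucc) a k + (x (Fin.last p) - a (p + k)) * fh (p + 1) x a (k - 1) := by
  rcases lt_trichotomy k 0 with hk | rfl | hk
  · rw [fh_of_neg _ _ _ hk, fh_of_neg _ _ _ hk, fh_of_neg _ _ _ (by omega), mul_zero, add_zero]
  · rw [fh_degree_zero, fh_degree_zero, fh_of_neg _ _ _ (by norm_num), mul_zero, add_zero]
  obtain ⟨m, rfl⟩ : ∃ m : ℕ, k = m + 1 := ⟨k.toNat - 1, by omega⟩
  rw [add_sub_cancel_right, ← Nat.cast_add_one, fh_natCast, fh_natCast, fh_natCast,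
    sum_filter_monotone_eq_castSucc_add_snoc _ fun _ => id]
  simp_rw [Fin.monotone_castSucc_comp_iff, Fin.monotone_snoc_last_iff, mul_sum]
  congr 1
  refine sum_congr rfl fun g _ => ?_
  rw [Fin.prod_univ_castSucc, mul_comm]
  simp [add_assoc]

lemma fe_succ (p : ℕ) (x : Fin (p + 1) → R) (a : ℤ → R) (k : ℤ) :
    fe (p + 1) x a k =
      fe p (x ∘ Fin.castSucc) a k +
        (x (Fin.last p) - a (p + 2 - k)) * fe p (x ∘ Fin.castSucc) a (k - 1) := by
  rcases lt_trichotomy k 0 with hk | rfl | hk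
  · rw [fe_of_neg _ _ _ hk, fe_of_neg _ _ _ hk, fe_of_neg _ _ _ (by omega), mul_zero, add_zero]
  · rw [fe_degree_zero, fe_degree_zero, fe_of_neg _ _ _ (by norm_num), mul_zero, add_zero]
  obtain ⟨m, rfl⟩ : ∃ m : ℕ, k = m + 1 := ⟨k.toNat - 1, by omega⟩
  rw [add_sub_cancel_right, ← Nat.cast_add_one, fe_natCast, fe_natCast, fe_natCast,
    sum_filter_monotone_eq_castSucc_add_snoc _ fun _ => StrictMono.monotone]
  simp_rw [Fin.strictMono_castSucc_comp_iff, Fin.strictMono_snoc_last_iff,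
    sum_filter_forall_ne_last, Fin.strictMono_castSucc_comp_iff, mul_sum]
  congr 1
  refine sum_congr rfl fun g _ => ?_
  rw [Fin.prod_univ_castSucc, mul_comm]
  simp only [Function.comp_apply, Fin.snoc_castSucc, Fin.snoc_last, Fin.val_castSucc,
    Fin.val_last]
  congr 3
  push_cast
  ring

lemma sum_alternating_fe_mul_fh_succ (p : ℕ) (x : Fin (p + 1) → R) (a : ℤ → R) (s : ℤ) :
    ∑ r ∈ range (p + 2),
        (-1 : R) ^ r * fe (p + 1) x a r * fh (p + 1) x (shiftSeq a (1 - s)) (s - r) =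
      ∑ r ∈ range (p + 1), (-1 : R) ^ r * fe p (x ∘ Fin.castSucc) a r *
        fh p (x ∘ Fin.castSucc) (shiftSeq a (1 - s)) (s - r) := by
  have hH (r : ℕ) : fh p (x ∘ Fin.castSucc) (shiftSeq a (1 - s)) (s - r) =
      fh (p + 1) x (shiftSeq a (1 - s)) (s - r) -
        (x (Fin.last p) - a (p + 1 - r)) * fh (p + 1) x (shiftSeq a (1 - s)) (s - r - 1) := by
    rw [fh_succ p x _ (s - r), shiftSeq, show (p : ℤ) + (s - r) + (1 - s) = p + 1 - r by ring]
    ring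
  have he_top : fe p (x ∘ Fin.castSucc) a (p + 1 : ℕ) = 0 :=
    fe_of_lt _ _ _ (Nat.lt_succ_self p)
  have he_neg : fe p (x ∘ Fin.castSucc) a ((0 : ℕ) - 1) = 0 := fe_of_neg _ _ _ (by norm_num)
  simp_rw [fe_succ, hH]
  generalize fe p (x ∘ Fin.castSucc) a = e at *
  generalize fh (p + 1) x (shiftSeq a (1 - s)) = H
  generalize x (Fin.last p) = y
  calc _ = ∑ r ∈ range (p + 2), (-1 : R) ^ r * e r * H (s - r) +
        ∑ r ∈ range (p + 2), (-1 : R) ^ r * (y - a (p + 2 - r)) * e (r - 1) * H (s - r) := by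
        rw [← sum_add_distrib]
        refine sum_congr rfl fun r _ => ?_
        ring
    _ = ∑ r ∈ range (p + 1), (-1 : R) ^ r * e r * H (s - r) +
        ∑ r ∈ range (p + 1),
          (-1 : R) ^ (r + 1) * (y - a (p + 1 - r)) * e r * H (s - r - 1) := by
        rw [sum_range_succ _ (p + 1), he_top, sum_range_succ' _ (p + 1), he_neg]
        simp only [mul_zero, zero_mul, add_zero]
        congr 1
        refine sum_congr rfl fun r _ => ?_
        push_cast
        rw [add_sub_cancel_right, show (p : ℤ) + 2 - (r + 1) = p + 1 - r by ring,
          sub_add_eq_sub_sub]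
    _ = _ := by
        rw [← sum_add_distrib]
        refine sum_congr rfl fun r _ => ?_
        ring

theorem sum_alternating_fe_mul_fh (p : ℕ) (x : Fin p → R) (a : ℤ → R) (s : ℤ) :
    ∑ r ∈ range (p + 1), (-1 : R) ^ r * fe p x a r * fh p x (shiftSeq a (1 - s)) (s - r) =
      if s = 0 then 1 else 0 := by
  induction p with
  | zero => simp [fe_degree_zero, fh_zero]
  | succ p ih => rw [sum_alternating_fe_mul_fh_succ, ih]

/-- The factorial Cauchy identity
    `Σ_{r=0}^{p} (-1)^r e_r(x|a) h_{s-r}(x|τ^{1-s}a) = 0` for every positive integer `s`. -/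
theorem factorial_cauchy (p : ℕ) (x : Fin p → R) (a : ℤ → R) (s : ℕ) (hs : 1 ≤ s) :
    ∑ r ∈ Finset.range (p + 1),
      (-1 : R) ^ r * fe p x a (r : ℤ) * fh p x (shiftSeq a (1 - (s : ℤ))) ((s : ℤ) - (r : ℤ)) = 0 := by
  rw [sum_alternating_fe_mul_fh, if_neg (by omega)]
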